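/- arXiv:2602.10894 — 3 statements merged into one kernel-verified Lean document; each statement's English description precedes it below -/
import Mathlib

section
/- Let 𝒜 be a finite nonempty set, π a probability mass function on 𝒜 with π(a) > 0 for all a, Q : 𝒜 → ℝ, and α, β > 0. Then the probability mass function π'(a) = exp((Q(a) + β·log π(a))/(α+β)) / Z, where Z = Σ_{a∈𝒜} exp((Q(a) + β·log π(a))/(α+β)), maximizes over all probability mass functions ρ on 𝒜 the objective Σ_a ρ(a)Q(a) − β·D_KL(ρ‖π) + α·H(ρ). -/
/-!
Regrouping the terms, the objective equals `(α + β) (∑ ρ c - ∑ ρ log ρ)` with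
`c = (Q + β log π) / (α + β)`. By Gibbs' inequality (`log x ≤ x - 1`) the bracket is at most
`log ∑ exp c`, with equality at the softmax of `c`, which is exactly `π'`.
-/

open Real Finset

/-- The regularized objective: `∑ ρ(a)Q(a) − β·KL(ρ‖p) + α·H(ρ)`,
with the conventions `0·log(0/p(a)) = 0` and `0·log 0 = 0`
(recall `Real.log 0 = 0` in Mathlib). -/
noncomputable def klentObjective {A : Type*} [Fintype A]
    (Q ρ p : A → ℝ) (α β : ℝ) : ℝ :=
  ∑ a, ρ a * Q a - β * (∑ a, ρ a * Real.log (ρ a / p a))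
    + α * (-∑ a, ρ a * Real.log (ρ a))

lemma mul_log_div_le_sub {x y : ℝ} (hx : 0 ≤ x) (hy : 0 < y) : x * log (y / x) ≤ y - x := by
  rcases hx.eq_or_lt with rfl | hx
  · simpa using hy.le
  · calc x * log (y / x) ≤ x * (y / x - 1) :=
          mul_le_mul_of_nonneg_left (log_le_sub_one_of_pos (div_pos hy hx)) hx.le
      _ = y - x := by field_simp

lemma sum_mul_log_div_le_sum_sub {ι : Type*} (s : Finset ι) {σ τ : ι → ℝ}
    (hσ : ∀ i ∈ s, 0 ≤ σ i) (hτ : ∀ i ∈ s, 0 < τ i) :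
    ∑ i ∈ s, σ i * log (τ i / σ i) ≤ ∑ i ∈ s, τ i - ∑ i ∈ s, σ i := by
  rw [← sum_sub_distrib]
  exact sum_le_sum fun i hi ↦ mul_log_div_le_sub (hσ i hi) (hτ i hi)

section Softmax

variable {ι : Type*} [Fintype ι]

noncomputable def softmax (c : ι → ℝ) (i : ι) : ℝ := exp (c i) / ∑ j, exp (c j)

lemma sum_exp_pos [Nonempty ι] (c : ι → ℝ) : 0 < ∑ j, exp (c j) :=
  sum_pos (fun j _ ↦ exp_pos (c j)) univ_nonempty

lemma softmax_pos [Nonempty ι] (c : ι → ℝ) (i : ι) : 0 < softmax c i :=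
  div_pos (exp_pos _) (sum_exp_pos c)

lemma sum_softmax [Nonempty ι] (c : ι → ℝ) : ∑ i, softmax c i = 1 := by
  simp only [softmax, ← sum_div, div_self (sum_exp_pos c).ne']

lemma log_softmax [Nonempty ι] (c : ι → ℝ) (i : ι) :
    log (softmax c i) = c i - log (∑ j, exp (c j)) := by
  rw [softmax, log_div (exp_pos _).ne' (sum_exp_pos c).ne', log_exp]

lemma sum_softmax_mul_sub_sum_mul_log [Nonempty ι] (c : ι → ℝ) :
    ∑ i, softmax c i * c i - ∑ i, softmax c i * log (softmax c i)
      = log (∑ j, exp (c j)) := by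
  simp only [log_softmax, ← sum_sub_distrib, ← mul_sub, sub_sub_cancel, ← sum_mul,
    sum_softmax, one_mul]

/-- Gibbs' variational principle. -/
theorem sum_mul_sub_sum_mul_log_le_log_sum_exp (c : ι → ℝ) {σ : ι → ℝ}
    (hσ : ∀ i, 0 ≤ σ i) (hσ1 : ∑ i, σ i = 1) :
    ∑ i, σ i * c i - ∑ i, σ i * log (σ i) ≤ log (∑ j, exp (c j)) := by
  have : Nonempty ι := by
    by_contra h
    simp [not_nonempty_iff.mp h] at hσ1
  have hgibbs := sum_mul_log_div_le_sum_sub univ (fun i _ ↦ hσ i) (fun i _ ↦ softmax_pos c i)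
  rw [sum_softmax, hσ1, sub_self] at hgibbs
  have hsplit : ∀ i, σ i * log (softmax c i / σ i)
      = σ i * c i - σ i * log (σ i) - σ i * log (∑ j, exp (c j)) := fun i ↦ by
    rcases (hσ i).eq_or_lt with h | h
    · simp [← h]
    · rw [log_div (softmax_pos c i).ne' h.ne', log_softmax]
      ring
  simp only [hsplit, sum_sub_distrib, ← sum_mul, hσ1, one_mul] at hgibbs
  linarith

end Softmax

lemma klentObjective_eq {A : Type*} [Fintype A] (Q ρ p : A → ℝ) {α β : ℝ}
    (hp : ∀ a, p a ≠ 0) (hαβ : α + β ≠ 0) :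
    klentObjective Q ρ p α β = (α + β) * (∑ a, ρ a * ((Q a + β * log (p a)) / (α + β))
      - ∑ a, ρ a * log (ρ a)) := by
  simp only [klentObjective, mul_sub, mul_neg, mul_sum]
  rw [← sub_eq_zero, ← sum_neg_distrib]
  simp only [← sum_sub_distrib, ← sum_add_distrib]
  refine sum_eq_zero fun a _ ↦ ?_
  rcases eq_or_ne (ρ a) 0 with h | h
  · simp [h]
  · rw [log_div h (hp a)]
    field_simp
    ring

theorem stmt0_general {A : Type*} [Fintype A] [Nonempty A]
    (p : A → ℝ) (hppos : ∀ a, 0 < p a)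
    (Q : A → ℝ) (α β : ℝ) (hα : 0 < α) (hβ : 0 < β)
    (Z : ℝ) (hZ : Z = ∑ a, Real.exp ((Q a + β * Real.log (p a)) / (α + β)))
    (p' : A → ℝ)
    (hp' : ∀ a, p' a = Real.exp ((Q a + β * Real.log (p a)) / (α + β)) / Z) :
    ∀ ρ : A → ℝ, (∀ a, 0 ≤ ρ a) → (∑ a, ρ a = 1) →
      klentObjective Q ρ p α β ≤ klentObjective Q p' p α β := by
  intro ρ hρ hρ1
  set c : A → ℝ := fun a ↦ (Q a + β * log (p a)) / (α + β)
  have hαβ : 0 < α + β := add_pos hα hβ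
  have hp'_eq : p' = softmax c := funext fun a ↦ by rw [hp' a, hZ]; rfl
  have hp : ∀ a, p a ≠ 0 := fun a ↦ (hppos a).ne'
  rw [klentObjective_eq Q ρ p hp hαβ.ne', klentObjective_eq Q p' p hp hαβ.ne', hp'_eq,
    sum_softmax_mul_sub_sum_mul_log]
  exact mul_le_mul_of_nonneg_left (sum_mul_sub_sum_mul_log_le_log_sum_exp c hρ hρ1) hαβ.le

theorem stmt0 {A : Type*} [Fintype A] [Nonempty A]
    (p : A → ℝ) (hppos : ∀ a, 0 < p a) (hpsum : ∑ a, p a = 1)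
    (Q : A → ℝ) (α β : ℝ) (hα : 0 < α) (hβ : 0 < β)
    (Z : ℝ) (hZ : Z = ∑ a, Real.exp ((Q a + β * Real.log (p a)) / (α + β)))
    (p' : A → ℝ)
    (hp' : ∀ a, p' a = Real.exp ((Q a + β * Real.log (p a)) / (α + β)) / Z) :
    ∀ ρ : A → ℝ, (∀ a, 0 ≤ ρ a) → (∑ a, ρ a = 1) →
      klentObjective Q ρ p α β ≤ klentObjective Q p' p α β :=
  stmt0_general p hppos Q α β hα hβ Z hZ p' hp'
end

section
/- Let 𝒜 be a finite nonempty set, π a probability mass function on 𝒜 with π(a) > 0 for all a, Q : 𝒜 → ℝ, and α, β > 0. Define π'(a) ∝ exp((Q(a) + β·log π(a))/(α+β)). Then the optimal objective value satisfies Σ_a π'(a)Q(a) − β·D_KL(π'‖π) + α·H(π') = (α+β)·log Σ_a exp((Q(a) + β·log π(a))/(α+β)). -/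
open Real Finset

section Softmax

variable {A : Type*} [Fintype A] [Nonempty A] (g : A → ℝ)

lemma sum_exp_pos_s3 : 0 < ∑ a, exp (g a) :=
  sum_pos (fun _ _ => exp_pos _) univ_nonempty

lemma sum_exp_div_sum_exp : ∑ a, exp (g a) / ∑ b, exp (g b) = 1 := by
  rw [← sum_div, div_self (sum_exp_pos_s3 g).ne']

lemma log_exp_div_sum_exp (a : A) :
    log (exp (g a) / ∑ b, exp (g b)) = g a - log (∑ b, exp (g b)) := by
  rw [log_div (exp_ne_zero _) (sum_exp_pos_s3 g).ne', log_exp]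

/-- Expected energy plus entropy of the Gibbs distribution `q ∝ exp g` is the log-partition
function. -/
theorem sum_gibbs_mul_sub_log (q : A → ℝ) (hq : ∀ a, q a = exp (g a) / ∑ b, exp (g b)) :
    ∑ a, q a * (g a - log (q a)) = log (∑ a, exp (g a)) := by
  have hq_sum : ∑ a, q a = 1 := by simp only [hq, sum_exp_div_sum_exp]
  have hlog a : g a - log (q a) = log (∑ b, exp (g b)) := by
    rw [hq, log_exp_div_sum_exp]; ring
  simp only [hlog, ← sum_mul, hq_sum, one_mul]

end Softmax

theorem stmt3_general {A : Type*} [Fintype A] [Nonempty A]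
    (p : A → ℝ) (hppos : ∀ a, 0 < p a)
    (Q : A → ℝ) (α β : ℝ) (hα : 0 < α) (hβ : 0 < β)
    (p' : A → ℝ)
    (hp' : ∀ a, p' a = Real.exp ((Q a + β * Real.log (p a)) / (α + β)) /
        ∑ b, Real.exp ((Q b + β * Real.log (p b)) / (α + β))) :
    ∑ a, p' a * Q a - β * (∑ a, p' a * Real.log (p' a / p a))
        + α * (-∑ a, p' a * Real.log (p' a))
      = (α + β) * Real.log (∑ a, Real.exp ((Q a + β * Real.log (p a)) / (α + β))) := by
  set g : A → ℝ := fun a => (Q a + β * log (p a)) / (α + β)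
  have hαβ : α + β ≠ 0 := by positivity
  -- Regrouping the objective as `(α + β) * (E_{p'}[g] + H(p'))`.
  have hterm a : p' a * Q a - β * (p' a * log (p' a / p a)) + α * -(p' a * log (p' a))
      = (α + β) * (p' a * (g a - log (p' a))) := by
    have hp'a : p' a ≠ 0 := by rw [hp' a]; exact (div_pos (exp_pos _) (sum_exp_pos_s3 g)).ne'
    rw [log_div hp'a (hppos a).ne']
    simp only [g]
    field_simp
    ring
  calc _ = ∑ a, (p' a * Q a - β * (p' a * log (p' a / p a)) + α * -(p' a * log (p' a))) := by
        rw [sum_add_distrib, sum_sub_distrib, ← mul_sum, ← sum_neg_distrib, ← mul_sum]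
    _ = (α + β) * ∑ a, p' a * (g a - log (p' a)) := by simp only [hterm, mul_sum]
    _ = _ := by rw [sum_gibbs_mul_sub_log g p' hp']

theorem stmt3 {A : Type*} [Fintype A] [Nonempty A]
    (p : A → ℝ) (hppos : ∀ a, 0 < p a) (hpsum : ∑ a, p a = 1)
    (Q : A → ℝ) (α β : ℝ) (hα : 0 < α) (hβ : 0 < β)
    (p' : A → ℝ)
    (hp' : ∀ a, p' a = Real.exp ((Q a + β * Real.log (p a)) / (α + β)) /
        ∑ b, Real.exp ((Q b + β * Real.log (p b)) / (α + β))) :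
    ∑ a, p' a * Q a - β * (∑ a, p' a * Real.log (p' a / p a))
        + α * (-∑ a, p' a * Real.log (p' a))
      = (α + β) * Real.log (∑ a, Real.exp ((Q a + β * Real.log (p a)) / (α + β))) :=
  stmt3_general p hppos Q α β hα hβ p' hp'
end

section
/- Let 𝒜 be a finite nonempty set, π a probability mass function with π(a) > 0 for all a, Q : 𝒜 → ℝ, α, β > 0, and π'(a) ∝ exp((Q(a) + β·log π(a))/(α+β)). Then for every probability mass function ρ on 𝒜, Σ_a ρ(a)Q(a) − β·D_KL(ρ‖π) + α·H(ρ) = (α+β)·(log Z − D_KL(ρ‖π')), where Z = Σ_a exp((Q(a)+β·log π(a))/(α+β)). In particular the regularized objective differs from its maximum by (α+β)·D_KL(ρ‖π'). -/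
/-!
Since `log π' a = (Q a + β log π a)/(α+β) - log Z`, splitting both divergences into entropy and
cross-entropy terms gives `D(ρ‖π') = -H(ρ) - (⟨ρ, Q⟩ + β⟨ρ, log π⟩)/(α+β) + log Z` and
`D(ρ‖π) = -H(ρ) - ⟨ρ, log π⟩`; the identity is then linear in `H(ρ)`, `⟨ρ, Q⟩`, `⟨ρ, log π⟩`.
-/

open Real Finset

theorem mul_log_div_eq_sub (x : ℝ) {y : ℝ} (hy : y ≠ 0) :
    x * log (x / y) = x * log x - x * log y := by
  rcases eq_or_ne x 0 with rfl | hx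
  · simp
  · rw [log_div hx hy, mul_sub]

section
variable {A : Type*} [Fintype A]

theorem sum_mul_log_div_eq_sub (ρ : A → ℝ) {q : A → ℝ} (hq : ∀ a, q a ≠ 0) :
    ∑ a, ρ a * log (ρ a / q a) = ∑ a, ρ a * log (ρ a) - ∑ a, ρ a * log (q a) := by
  rw [← sum_sub_distrib]
  exact sum_congr rfl fun a _ => mul_log_div_eq_sub (ρ a) (hq a)

theorem sum_mul_log_exp_div {ρ : A → ℝ} (hρ : ∑ a, ρ a = 1) (f : A → ℝ) {Z : ℝ} (hZ : 0 < Z) :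
    ∑ a, ρ a * log (exp (f a) / Z) = ∑ a, ρ a * f a - log Z := by
  simp only [log_div (exp_ne_zero _) hZ.ne', log_exp, mul_sub, sum_sub_distrib, ← sum_mul, hρ,
    one_mul]

end

theorem stmt4_general {A : Type*} [Fintype A] [Nonempty A]
    (p : A → ℝ) (hppos : ∀ a, 0 < p a)
    (Q : A → ℝ) (α β : ℝ) (hα : 0 < α) (hβ : 0 < β)
    (Z : ℝ) (hZ : Z = ∑ a, Real.exp ((Q a + β * Real.log (p a)) / (α + β)))
    (p' : A → ℝ)
    (hp' : ∀ a, p' a = Real.exp ((Q a + β * Real.log (p a)) / (α + β)) / Z) :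
    ∀ ρ : A → ℝ, (∀ a, 0 ≤ ρ a) → (∑ a, ρ a = 1) →
      ∑ a, ρ a * Q a - β * (∑ a, ρ a * Real.log (ρ a / p a))
          + α * (-∑ a, ρ a * Real.log (ρ a))
        = (α + β) * (Real.log Z - ∑ a, ρ a * Real.log (ρ a / p' a)) := by
  intro ρ _ hρ
  have hZpos : 0 < Z := hZ ▸ sum_pos (fun a _ => exp_pos _) univ_nonempty
  have hp'ne : ∀ a, p' a ≠ 0 := fun a => by rw [hp']; positivity
  have hcross : ∑ a, ρ a * log (p' a)
      = (∑ a, ρ a * Q a + β * ∑ a, ρ a * log (p a)) / (α + β) - log Z := by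
    simp only [hp', sum_mul_log_exp_div hρ _ hZpos, mul_div_assoc', ← sum_div, mul_add,
      sum_add_distrib, mul_left_comm _ β, ← mul_sum]
  rw [sum_mul_log_div_eq_sub ρ fun a => (hppos a).ne', sum_mul_log_div_eq_sub ρ hp'ne, hcross]
  have hαβ : α + β ≠ 0 := by positivity
  field_simp
  ring

theorem stmt4 {A : Type*} [Fintype A] [Nonempty A]
    (p : A → ℝ) (hppos : ∀ a, 0 < p a) (hpsum : ∑ a, p a = 1)
    (Q : A → ℝ) (α β : ℝ) (hα : 0 < α) (hβ : 0 < β)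
    (Z : ℝ) (hZ : Z = ∑ a, Real.exp ((Q a + β * Real.log (p a)) / (α + β)))
    (p' : A → ℝ)
    (hp' : ∀ a, p' a = Real.exp ((Q a + β * Real.log (p a)) / (α + β)) / Z) :
    ∀ ρ : A → ℝ, (∀ a, 0 ≤ ρ a) → (∑ a, ρ a = 1) →
      ∑ a, ρ a * Q a - β * (∑ a, ρ a * Real.log (ρ a / p a))
          + α * (-∑ a, ρ a * Real.log (ρ a))
        = (α + β) * (Real.log Z - ∑ a, ρ a * Real.log (ρ a / p' a)) :=
  stmt4_general p hppos Q α β hα hβ Z hZ p' hp'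
end
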